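/- arXiv:2205.03756 — 5 statements merged into one kernel-verified Lean document; each statement's English description precedes it below -/
import Mathlib

section
/- Let H be a Hilbert space, S ⊆ H a nonempty closed convex set, and F : H → H a monotone map that is continuous from line segments in H to the weak topology of H (hemicontinuous). Then the set-valued map x ↦ F(x) + N_S(x), where N_S(x) is the normal cone of S at x, is maximal monotone. -/
open RealInnerProductSpace Topology Filter

variable {H : Type*} [NormedAddCommGroup H] [InnerProductSpace ℝ H]

/-- The normal cone of a set `S` at `x`: empty when `x ∉ S`. -/
def normalCone (S : Set H) (x : H) : Set H :=
  {v | x ∈ S ∧ ∀ y ∈ S, ⟪v, y - x⟫ ≤ 0}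

/-- A set-valued map is monotone. -/
def MonotoneSetValued (Φ : H → Set H) : Prop :=
  ∀ x y u v, u ∈ Φ x → v ∈ Φ y → 0 ≤ ⟪u - v, x - y⟫

/-- A set-valued map is maximal monotone. -/
def MaximalMonotoneSetValued (Φ : H → Set H) : Prop :=
  MonotoneSetValued Φ ∧
    ∀ Ψ : H → Set H, MonotoneSetValued Ψ → (∀ x, Φ x ⊆ Ψ x) → ∀ x, Ψ x = Φ x

/-- If `S` is a nonempty closed convex subset of a Hilbert space and `F` is a monotone
hemicontinuous map (continuous from line segments to the weak topology), then
`x ↦ F(x) + N_S(x)` is maximal monotone. -/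
theorem monotone_hemicontinuous_add_normalCone_maximalMonotone
    [CompleteSpace H] (S : Set H) (hS : S.Nonempty) (hclosed : IsClosed S)
    (hconv : Convex ℝ S) (F : H → H)
    (hmono : ∀ x y : H, 0 ≤ ⟪F x - F y, x - y⟫)
    (hhemi : ∀ x y z : H,
      ContinuousOn (fun t : ℝ => ⟪F (x + t • (y - x)), z⟫) (Set.Icc 0 1)) :
    MaximalMonotoneSetValued (fun x => (fun v => F x + v) '' normalCone S x) := by
  constructor
  · rintro x y u v ⟨a, ⟨hxS, ha⟩, rfl⟩ ⟨b, ⟨hyS, hb⟩, rfl⟩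
    have h1 := hmono x y
    have h2 : ⟪a, y - x⟫ ≤ 0 := ha y hyS
    have h3 : ⟪b, x - y⟫ ≤ 0 := hb x hxS
    have e2 : ⟪a, y - x⟫ = -⟪a, x - y⟫ := by rw [← neg_sub x y, inner_neg_right]
    have expand : ⟪F x + a - (F y + b), x - y⟫
        = ⟪F x - F y, x - y⟫ + ⟪a, x - y⟫ - ⟪b, x - y⟫ := by
      have : F x + a - (F y + b) = (F x - F y) + a - b := by abel
      rw [this, inner_sub_left, inner_add_left]
    rw [expand]; linarith
  · intro Ψ hΨ hsub x
    ext u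
    constructor
    swap
    · exact fun hu => hsub x hu
    intro hu
    have key : ∀ y ∈ S, ∀ v, (∀ z ∈ S, ⟪v, z - y⟫ ≤ 0) →
        0 ≤ ⟪u - (F y + v), x - y⟫ := fun y hy v hv =>
      hΨ x y u (F y + v) hu (hsub y ⟨v, ⟨hy, hv⟩, rfl⟩)
    -- Step 1: x ∈ S, via projection
    obtain ⟨p, hpS, hproj⟩ := exists_norm_eq_iInf_of_complete_convex hS hclosed.isComplete hconv x
    have hN : ∀ w ∈ S, ⟪x - p, w - p⟫ ≤ 0 :=
      (norm_eq_iInf_iff_real_inner_le_zero hconv hpS).mp hproj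
    have hsq : ∀ t : ℝ, 0 ≤ t → t * ‖x - p‖ ^ 2 ≤ ⟪u - F p, x - p⟫ := by
      intro t ht
      have h := key p hpS (t • (x - p)) (fun z hz => by
        rw [real_inner_smul_left]
        exact mul_nonpos_of_nonneg_of_nonpos ht (hN z hz))
      have e : ⟪u - (F p + t • (x - p)), x - p⟫
          = ⟪u - F p, x - p⟫ - t * ⟪x - p, x - p⟫ := by
        have : u - (F p + t • (x - p)) = (u - F p) - t • (x - p) := by abel
        rw [this, inner_sub_left, real_inner_smul_left]
      rw [e] at h
      rw [← real_inner_self_eq_norm_sq]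
      linarith
    have hxp : x = p := by
      by_contra hne
      have hpos : 0 < ‖x - p‖ ^ 2 := by
        exact pow_pos (norm_pos_iff.mpr (sub_ne_zero.mpr hne)) 2
      set c := ⟪u - F p, x - p⟫ with hc
      have hc0 : 0 ≤ c := by have := hsq 0 le_rfl; simpa using this
      have ht : 0 ≤ (c + 1) / ‖x - p‖ ^ 2 := by positivity
      have := hsq ((c + 1) / ‖x - p‖ ^ 2) ht
      rw [div_mul_cancel₀ _ (ne_of_gt hpos)] at this
      linarith
    have hxS : x ∈ S := hxp ▸ hpS
    -- Step 2: u - F x ∈ normal cone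
    have hnc : ∀ y ∈ S, ⟪u - F x, y - x⟫ ≤ 0 := by
      intro y hy
      set g : ℝ → ℝ := fun t => ⟪F (x + t • (y - x)), y - x⟫ with hg
      have hcont : ContinuousOn g (Set.Icc 0 1) := hhemi x y (y - x)
      have hlb : ∀ t ∈ Set.Ioc (0 : ℝ) 1, ⟪u, y - x⟫ ≤ g t := by
        intro t ht
        set yt := x + t • (y - x) with hyt
        have hytS : yt ∈ S := by
          have := hconv hxS hy (by linarith [ht.2] : (0:ℝ) ≤ 1 - t) ht.1.le (by ring)
          have e : (1 - t) • x + t • y = x + t • (y - x) := by module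
          rwa [e] at this
        have h := key yt hytS 0 (fun z hz => by simp)
        have e : ⟪u - (F yt + 0), x - yt⟫ = -t * ⟪u - F yt, y - x⟫ := by
          have e1 : x - yt = -(t • (y - x)) := by rw [hyt]; abel
          rw [e1, inner_neg_right, inner_smul_right]
          ring
        rw [e] at h
        have h2 : ⟪u - F yt, y - x⟫ ≤ 0 := by
          nlinarith [ht.1]
        rw [inner_sub_left] at h2
        have : g t = ⟪F yt, y - x⟫ := rfl
        linarith [this ▸ h2]
      have hne : (𝓝[Set.Ioc (0:ℝ) 1] 0).NeBot := left_nhdsWithin_Ioc_neBot zero_lt_one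
      have htend : Filter.Tendsto g (𝓝[Set.Ioc (0:ℝ) 1] 0) (𝓝 (g 0)) :=
        (hcont 0 ⟨le_rfl, zero_le_one⟩).mono_left
          (nhdsWithin_mono 0 Set.Ioc_subset_Icc_self)
      have hle : ⟪u, y - x⟫ ≤ g 0 :=
        ge_of_tendsto htend (Filter.eventually_of_mem self_mem_nhdsWithin hlb)
      have hg0 : g 0 = ⟪F x, y - x⟫ := by simp [hg]
      rw [inner_sub_left]
      linarith [hg0 ▸ hle]
    exact ⟨u - F x, ⟨hxS, hnc⟩, by module⟩
end

section
/- Let (Ω, F, P) be a complete probability space, C : Ω ⇒ ℝⁿ a measurable set-valued map with nonempty closed convex values, and let 𝒞 = { x ∈ L²(Ω,F,ℝⁿ) : x(ω) ∈ C(ω) a.s. }. Let F : L²(Ω,F,ℝⁿ) → L²(Ω,F,ℝⁿ) and x* ∈ 𝒞. Then the integral condition E⟨F(x*), x − x*⟩ ≥ 0 for all x ∈ 𝒞 holds if and only if the pointwise condition ⟨F(x*)(ω), z − x*(ω)⟩ ≥ 0 for all z ∈ C(ω), for almost every ω ∈ Ω, holds. -/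
open MeasureTheory RealInnerProductSpace

/-!
The pointwise condition at `ω` says exactly that `x*(ω)` is the nearest point of `C ω` to
`x*(ω) - F(x*)(ω)`. Let `p ω` be that nearest point. It is measurable, being the pointwise limit of
the first points of a dense sequence that almost minimise the distance to `x* - F(x*)` while being
almost in `C ω` (in a convex set, almost minimisers are close to the minimiser), and
`‖x* - p‖ ≤ ‖F(x*)‖`, so `p ∈ 𝒞` is an admissible test function. The projection inequality gives
`⟪F(x*), p - x*⟫ ≤ -‖x* - p‖²` pointwise, so the integral condition forces `p = x*` a.e.
-/

open Metric Filter Topology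

section NearestPoint

variable {E : Type*} [NormedAddCommGroup E] {K : Set E} {u p : E}

theorem infDist_eq_norm_sub (hp : p ∈ K) (hmin : ‖u - p‖ = ⨅ w : K, ‖u - w‖) :
    infDist u K = ‖u - p‖ := by
  have : Nonempty K := ⟨⟨p, hp⟩⟩
  simp only [hmin, infDist_eq_iInf, dist_eq_norm]

variable [InnerProductSpace ℝ E]

theorem norm_sub_sq_add_norm_sub_sq_le (hK : Convex ℝ K) (hp : p ∈ K)
    (hmin : ‖u - p‖ = ⨅ w : K, ‖u - w‖) {z : E} (hz : z ∈ K) :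
    ‖u - p‖ ^ 2 + ‖z - p‖ ^ 2 ≤ ‖u - z‖ ^ 2 := by
  have hinner := (norm_eq_iInf_iff_real_inner_le_zero hK hp).1 hmin z hz
  have hsplit : u - z = (u - p) - (z - p) := by abel
  rw [hsplit, norm_sub_sq_real (u - p) (z - p)]
  linarith

theorem dist_le_of_infDist_lt_of_dist_lt (hK : Convex ℝ K) (hp : p ∈ K)
    (hmin : ‖u - p‖ = ⨅ w : K, ‖u - w‖) {y : E} {δ : ℝ} (hyK : infDist y K < δ)
    (hyu : dist u y < ‖u - p‖ + δ) :
    dist y p ≤ δ + √(4 * δ * (‖u - p‖ + δ)) := by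
  obtain ⟨z, hz, hyz⟩ := (infDist_lt_iff ⟨p, hp⟩).1 hyK
  have huz : ‖u - z‖ ≤ ‖u - p‖ + 2 * δ := by
    rw [← dist_eq_norm]
    linarith [dist_triangle u y z]
  -- `(‖u - p‖ + 2δ)² - ‖u - p‖² = 4δ(‖u - p‖ + δ)`
  have hzp : ‖z - p‖ ≤ √(4 * δ * (‖u - p‖ + δ)) := by
    refine (le_abs_self _).trans (Real.abs_le_sqrt ?_)
    have := norm_sub_sq_add_norm_sub_sq_le hK hp hmin hz
    nlinarith [norm_nonneg (u - z), norm_nonneg (u - p)]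
  calc dist y p ≤ dist y z + dist z p := dist_triangle y z p
    _ ≤ δ + √(4 * δ * (‖u - p‖ + δ)) := by rw [dist_eq_norm z]; linarith

theorem tendsto_of_infDist_lt_of_dist_lt (hK : Convex ℝ K) (hp : p ∈ K)
    (hmin : ‖u - p‖ = ⨅ w : K, ‖u - w‖) {y : ℕ → E}
    (hyK : ∀ k : ℕ, infDist (y k) K < 1 / (k + 1))
    (hyu : ∀ k : ℕ, dist u (y k) < ‖u - p‖ + 1 / (k + 1)) :
    Tendsto y atTop (𝓝 p) := by
  set g : ℝ → ℝ := fun δ => δ + √(4 * δ * (‖u - p‖ + δ))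
  have hg : Tendsto g (𝓝 0) (𝓝 0) := by
    have hcont : Continuous g := by fun_prop
    simpa [g] using hcont.tendsto 0
  rw [tendsto_iff_dist_tendsto_zero]
  exact squeeze_zero (fun _ => dist_nonneg)
    (fun k => dist_le_of_infDist_lt_of_dist_lt hK hp hmin (hyK k) (hyu k))
    (hg.comp tendsto_one_div_add_atTop_nhds_zero_nat)

variable {x f : E}

theorem inner_sub_add_norm_sub_sq_nonpos (hK : Convex ℝ K) (hx : x ∈ K) (hp : p ∈ K)
    (hmin : ‖x - f - p‖ = ⨅ w : K, ‖x - f - w‖) :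
    ⟪f, p - x⟫ + ‖x - p‖ ^ 2 ≤ 0 := by
  have hinner := (norm_eq_iInf_iff_real_inner_le_zero hK hp).1 hmin x hx
  rw [show x - f - p = (x - p) - f by abel, inner_sub_left,
    real_inner_self_eq_norm_sq] at hinner
  rw [show p - x = -(x - p) by abel, inner_neg_right]
  linarith [real_inner_comm f (x - p)]

theorem norm_sub_le_of_norm_sub_eq_iInf (hK : Convex ℝ K) (hx : x ∈ K) (hp : p ∈ K)
    (hmin : ‖x - f - p‖ = ⨅ w : K, ‖x - f - w‖) :
    ‖x - p‖ ≤ ‖f‖ := by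
  have hgap := inner_sub_add_norm_sub_sq_nonpos hK hx hp hmin
  have hcs := real_inner_le_norm f (x - p)
  rw [show p - x = -(x - p) by abel, inner_neg_right] at hgap
  nlinarith [norm_nonneg (x - p), norm_nonneg f]

theorem inner_sub_nonneg_of_norm_sub_eq_iInf (hK : Convex ℝ K) (hx : x ∈ K)
    (hmin : ‖x - f - x‖ = ⨅ w : K, ‖x - f - w‖) {z : E} (hz : z ∈ K) :
    0 ≤ ⟪f, z - x⟫ := by
  have hinner := (norm_eq_iInf_iff_real_inner_le_zero hK hx).1 hmin z hz
  rw [sub_sub_cancel_left, inner_neg_left] at hinner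
  linarith

end NearestPoint

section MeasurableNearestPoint

variable {Ω E : Type*} [MeasurableSpace Ω] {C : Ω → Set E}

theorem measurable_infDist_const_setValued [PseudoMetricSpace E]
    (hC : ∀ A : Set E, IsOpen A → MeasurableSet {ω | (C ω ∩ A).Nonempty})
    (hne : ∀ ω, (C ω).Nonempty) (y : E) :
    Measurable fun ω => infDist y (C ω) := by
  refine measurable_of_Iio fun r => ?_
  convert hC (ball y r) isOpen_ball using 1
  ext ω
  simp [infDist_lt_iff (hne ω), Set.Nonempty, dist_comm]

theorem Measurable.infDist_setValued [MetricSpace E] [SecondCountableTopology E]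
    [MeasurableSpace E] [OpensMeasurableSpace E]
    (hC : ∀ A : Set E, IsOpen A → MeasurableSet {ω | (C ω ∩ A).Nonempty})
    (hne : ∀ ω, (C ω).Nonempty) {u : Ω → E} (hu : Measurable u) :
    Measurable fun ω => Metric.infDist (u ω) (C ω) := by
  have hjoint : Measurable (Function.uncurry fun y ω => Metric.infDist y (C ω)) :=
    measurable_uncurry_of_continuous_of_measurable (fun _ => continuous_infDist_pt _)
      (measurable_infDist_const_setValued hC hne)
  simpa only [Function.comp_def, Function.uncurry_apply_pair, id_eq] using
    hjoint.comp (hu.prodMk measurable_id)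

variable [NormedAddCommGroup E] [InnerProductSpace ℝ E] [SecondCountableTopology E]
  [MeasurableSpace E] [BorelSpace E]

theorem measurable_of_norm_sub_eq_iInf
    (hC : ∀ A : Set E, IsOpen A → MeasurableSet {ω | (C ω ∩ A).Nonempty})
    (hconv : ∀ ω, Convex ℝ (C ω)) {u p : Ω → E} (hu : Measurable u) (hpC : ∀ ω, p ω ∈ C ω)
    (hmin : ∀ ω, ‖u ω - p ω‖ = ⨅ w : C ω, ‖u ω - w‖) :
    Measurable p := by
  classical
  have hne : ∀ ω, (C ω).Nonempty := fun ω => ⟨p ω, hpC ω⟩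
  have hd : ∀ ω, infDist (u ω) (C ω) = ‖u ω - p ω‖ := fun ω =>
    infDist_eq_norm_sub (hpC ω) (hmin ω)
  set e := TopologicalSpace.denseSeq E
  let good (k : ℕ) (ω : Ω) (i : ℕ) : Prop :=
    infDist (e i) (C ω) < 1 / (k + 1) ∧ dist (u ω) (e i) < infDist (u ω) (C ω) + 1 / (k + 1)
  have hgood : ∀ k ω, ∃ i, good k ω i := by
    intro k ω
    obtain ⟨i, hi⟩ := (TopologicalSpace.denseRange_denseSeq E).exists_dist_lt (p ω)
      Nat.one_div_pos_of_nat
    refine ⟨i, (infDist_le_dist_of_mem (hpC ω)).trans_lt (by rwa [dist_comm]), ?_⟩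
    rw [hd, ← dist_eq_norm]
    linarith [dist_triangle (u ω) (p ω) (e i)]
  have hgood_meas : ∀ k i, MeasurableSet {ω | good k ω i} := fun k i =>
    (measurableSet_lt (measurable_infDist_const_setValued hC hne _) measurable_const).inter
      (measurableSet_lt (hu.dist measurable_const) ((hu.infDist_setValued hC hne).add_const _))
  have hq_meas : ∀ k, Measurable fun ω => e (Nat.find (hgood k ω)) := fun k =>
    measurable_from_nat.comp (measurable_find (hgood k) (hgood_meas k))
  refine measurable_of_tendsto_metrizable hq_meas (tendsto_pi_nhds.2 fun ω => ?_)
  refine tendsto_of_infDist_lt_of_dist_lt (hconv ω) (hpC ω) (hmin ω)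
    (fun k => (Nat.find_spec (hgood k ω)).1) (fun k => ?_)
  rw [← hd]
  exact (Nat.find_spec (hgood k ω)).2

theorem exists_measurable_ae_norm_sub_eq_iInf [CompleteSpace E] {μ : Measure Ω}
    (hC : ∀ A : Set E, IsOpen A → MeasurableSet {ω | (C ω ∩ A).Nonempty})
    (hne : ∀ ω, (C ω).Nonempty) (hclosed : ∀ ω, IsClosed (C ω))
    (hconv : ∀ ω, Convex ℝ (C ω)) {u : Ω → E} (hu : AEMeasurable u μ) :
    ∃ p : Ω → E, Measurable p ∧ (∀ ω, p ω ∈ C ω) ∧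
      ∀ᵐ ω ∂μ, ‖u ω - p ω‖ = ⨅ w : C ω, ‖u ω - w‖ := by
  choose p hpC hmin using fun ω => exists_norm_eq_iInf_of_complete_convex (hne ω)
    (hclosed ω).isComplete (hconv ω) (hu.mk u ω)
  refine ⟨p, measurable_of_norm_sub_eq_iInf hC hconv hu.measurable_mk hpC hmin, hpC, ?_⟩
  filter_upwards [hu.ae_eq_mk] with ω hω
  rw [hω]
  exact hmin ω

end MeasurableNearestPoint

section L2

variable {Ω E : Type*} [MeasurableSpace Ω] {μ : Measure Ω} [NormedAddCommGroup E]
  [InnerProductSpace ℝ E] {f x p : Ω → E}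

theorem MeasureTheory.MemLp.integrable_inner (hf : MemLp f 2 μ) (hx : MemLp x 2 μ) :
    Integrable (fun ω => ⟪f ω, x ω⟫) μ := by
  refine (L2.integrable_inner (𝕜 := ℝ) (hf.toLp f) (hx.toLp x)).congr ?_
  filter_upwards [hf.coeFn_toLp, hx.coeFn_toLp] with ω hfω hxω
  rw [hfω, hxω]

theorem ae_eq_of_integral_inner_nonneg (hf : MemLp f 2 μ) (hx : MemLp x 2 μ) (hp : MemLp p 2 μ)
    (hgap : ∀ᵐ ω ∂μ, ⟪f ω, p ω - x ω⟫ + ‖x ω - p ω‖ ^ 2 ≤ 0)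
    (hint : 0 ≤ ∫ ω, ⟪f ω, p ω - x ω⟫ ∂μ) :
    x =ᵐ[μ] p := by
  have hsq : Integrable (fun ω => ‖x ω - p ω‖ ^ 2) μ := (hx.sub hp).norm.integrable_sq
  have hsq_nonneg : 0 ≤ fun ω => ‖x ω - p ω‖ ^ 2 := fun ω => sq_nonneg _
  have hsq_zero : ∫ ω, ‖x ω - p ω‖ ^ 2 ∂μ = 0 := by
    have hle : ∫ ω, (⟪f ω, p ω - x ω⟫ + ‖x ω - p ω‖ ^ 2) ∂μ ≤ 0 := integral_nonpos_of_ae hgap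
    have hinner : Integrable (fun ω => ⟪f ω, p ω - x ω⟫) μ := hf.integrable_inner (hp.sub hx)
    rw [integral_add hinner hsq] at hle
    linarith [integral_nonneg (μ := μ) hsq_nonneg]
  filter_upwards [(integral_eq_zero_iff_of_nonneg hsq_nonneg hsq).1 hsq_zero] with ω hω
  simpa [sub_eq_zero] using hω

end L2

theorem integral_VI_iff_pointwise_VI_general
    {Ω : Type*} {n : ℕ} {mF : MeasurableSpace Ω} {μ : Measure Ω}
    (C : Ω → Set (EuclideanSpace ℝ (Fin n)))
    (hCmeas : ∀ A : Set (EuclideanSpace ℝ (Fin n)), IsOpen A →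
      MeasurableSet {ω | (C ω ∩ A).Nonempty})
    (hCne : ∀ ω, (C ω).Nonempty) (hCclosed : ∀ ω, IsClosed (C ω))
    (hCconv : ∀ ω, Convex ℝ (C ω))
    (F : (Ω → EuclideanSpace ℝ (Fin n)) → Ω → EuclideanSpace ℝ (Fin n))
    (xs : Ω → EuclideanSpace ℝ (Fin n)) (hxs : MemLp xs 2 μ)
    (hxsC : ∀ᵐ ω ∂μ, xs ω ∈ C ω) (hFxs : MemLp (F xs) 2 μ) :
    (∀ x : Ω → EuclideanSpace ℝ (Fin n), MemLp x 2 μ → (∀ᵐ ω ∂μ, x ω ∈ C ω) →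
        0 ≤ ∫ ω, ⟪F xs ω, x ω - xs ω⟫ ∂μ) ↔
      (∀ᵐ ω ∂μ, ∀ z ∈ C ω, 0 ≤ ⟪F xs ω, z - xs ω⟫) := by
  refine ⟨fun hVI => ?_, fun hpt x _ hxC => integral_nonneg_of_ae ?_⟩
  · obtain ⟨p, hp_meas, hpC, hmin⟩ := exists_measurable_ae_norm_sub_eq_iInf hCmeas hCne hCclosed
      hCconv (hxs.1.sub hFxs.1).aemeasurable
    have hgap : ∀ᵐ ω ∂μ, ⟪F xs ω, p ω - xs ω⟫ + ‖xs ω - p ω‖ ^ 2 ≤ 0 := by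
      filter_upwards [hxsC, hmin] with ω hxω hminω
      exact inner_sub_add_norm_sub_sq_nonpos (hCconv ω) hxω (hpC ω) hminω
    have hxs_sub_p : MemLp (xs - p) 2 μ := by
      refine hFxs.of_le (hxs.1.sub hp_meas.aestronglyMeasurable) ?_
      filter_upwards [hxsC, hmin] with ω hxω hminω
      exact norm_sub_le_of_norm_sub_eq_iInf (hCconv ω) hxω (hpC ω) hminω
    have hp : MemLp p 2 μ := by simpa using hxs.sub hxs_sub_p
    have hxp : xs =ᵐ[μ] p :=
      ae_eq_of_integral_inner_nonneg hFxs hxs hp hgap (hVI p hp (ae_of_all _ hpC))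
    filter_upwards [hxsC, hxp, hmin] with ω hxω hxpω hminω z hz
    rw [← hxpω] at hminω
    exact inner_sub_nonneg_of_norm_sub_eq_iInf (hCconv ω) hxω hminω hz
  · filter_upwards [hpt, hxC] with ω hptω hxω
    exact hptω (x ω) hxω

/-- For a measurable set-valued map `C` with nonempty closed convex values and the set
`𝒞` of its `L²`-selections, the integral variational inequality
`E⟨F(x*), x − x*⟩ ≥ 0 ∀ x ∈ 𝒞` is equivalent to the pointwise one
`⟨F(x*)(ω), z − x*(ω)⟩ ≥ 0 ∀ z ∈ C(ω)` for a.e. `ω`. -/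
theorem integral_VI_iff_pointwise_VI
    {Ω : Type*} {n : ℕ} {mF : MeasurableSpace Ω} {μ : Measure Ω} [IsProbabilityMeasure μ]
    [μ.IsComplete]
    (C : Ω → Set (EuclideanSpace ℝ (Fin n)))
    (hCmeas : ∀ A : Set (EuclideanSpace ℝ (Fin n)), IsOpen A →
      MeasurableSet {ω | (C ω ∩ A).Nonempty})
    (hCne : ∀ ω, (C ω).Nonempty) (hCclosed : ∀ ω, IsClosed (C ω))
    (hCconv : ∀ ω, Convex ℝ (C ω))
    (F : (Ω → EuclideanSpace ℝ (Fin n)) → Ω → EuclideanSpace ℝ (Fin n))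
    (xs : Ω → EuclideanSpace ℝ (Fin n)) (hxs : MemLp xs 2 μ)
    (hxsC : ∀ᵐ ω ∂μ, xs ω ∈ C ω) (hFxs : MemLp (F xs) 2 μ) :
    (∀ x : Ω → EuclideanSpace ℝ (Fin n), MemLp x 2 μ → (∀ᵐ ω ∂μ, x ω ∈ C ω) →
        0 ≤ ∫ ω, ⟪F xs ω, x ω - xs ω⟫ ∂μ) ↔
      (∀ᵐ ω ∂μ, ∀ z ∈ C ω, 0 ≤ ⟪F xs ω, z - xs ω⟫) :=
  integral_VI_iff_pointwise_VI_general (mF := mF) C hCmeas hCne hCclosed hCconv F xs hxs hxsC hFxs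
end

section
/- Let g : ℝⁿ × Ω → ℝ be convex and continuously differentiable in its first argument and measurable in the second, with E|g(0,·)| < ∞, and suppose there is a nonnegative random variable η with Eη² < ∞ such that |g(u,ω) − g(v,ω)| ≤ η(ω)|u − v| a.s. for all u, v ∈ ℝⁿ. Then f(x) := E g(x(ω), ω) is a well-defined real-valued convex function on L²(Ω,F,ℝⁿ), it is Gâteaux differentiable, and its Gâteaux derivative at x is the random vector ω ↦ ∇_x g(x(ω), ω). -/
/-!
Off a single null set, `g(·, ω)` is `η(ω)`-Lipschitz for all `u, v` at once: the a.e. bound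
for a countable dense set of pairs extends by continuity. Then `|g(x, ω)| ≤ |g(0, ω)| + η‖x‖`
and `‖∇g(·, ω)‖ ≤ η` give integrability and square integrability of the gradient (Hölder),
convexity integrates pointwise, and `t ↦ g(x + t d, ω)` is `η‖d‖`-Lipschitz with `η‖d‖ ∈ L¹`,
so one may differentiate under the integral sign. The gradient is measurable in `ω` because its
coordinates in an orthonormal basis are limits of difference quotients.
-/

open MeasureTheory RealInnerProductSpace Filter

open scoped ENNReal

section Pointwise

variable {E : Type*} [NormedAddCommGroup E]

theorem forall_abs_sub_le_of_dense {f : E → ℝ} (hf : Continuous f) {s : Set E} (hs : Dense s)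
    {C : ℝ} (h : ∀ u ∈ s, ∀ v ∈ s, |f u - f v| ≤ C * ‖u - v‖) (u v : E) :
    |f u - f v| ≤ C * ‖u - v‖ :=
  (hs.prod hs).induction (P := fun p : E × E => |f p.1 - f p.2| ≤ C * ‖p.1 - p.2‖)
    (fun p hp => h p.1 hp.1 p.2 hp.2)
    (isClosed_le (hf.comp continuous_fst |>.sub (hf.comp continuous_snd)).abs
      (continuous_const.mul (continuous_fst.sub continuous_snd).norm)) (u, v)

variable [InnerProductSpace ℝ E] [CompleteSpace E]

theorem norm_gradient_le_of_abs_sub_le {f : E → ℝ} {u : E} {C : ℝ} (hC : 0 ≤ C)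
    (h : ∀ v, |f v - f u| ≤ C * ‖v - u‖) : ‖gradient f u‖ ≤ C := by
  rw [gradient, LinearIsometryEquiv.norm_map]
  exact norm_fderiv_le_of_lip' ℝ hC (Eventually.of_forall h)

theorem OrthonormalBasis.sum_fderiv_smul_eq_gradient {ι : Type*} [Fintype ι]
    (b : OrthonormalBasis ι ℝ E) (f : E → ℝ) (u : E) :
    ∑ i, fderiv ℝ f u (b i) • b i = gradient f u := by
  conv_rhs => rw [← b.sum_repr' (gradient f u)]
  simp only [real_inner_comm, inner_gradient_left]

end Pointwise

section AeLipschitz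

variable {Ω E : Type*} [MeasurableSpace Ω] {μ : Measure Ω} [NormedAddCommGroup E]
  [TopologicalSpace.SeparableSpace E] {g : E → Ω → ℝ} {η : Ω → ℝ}

theorem ae_forall_abs_sub_le (hc : ∀ ω, Continuous (g · ω))
    (h : ∀ u v, ∀ᵐ ω ∂μ, |g u ω - g v ω| ≤ η ω * ‖u - v‖) :
    ∀ᵐ ω ∂μ, ∀ u v, |g u ω - g v ω| ≤ η ω * ‖u - v‖ := by
  obtain ⟨s, hs_count, hs_dense⟩ := TopologicalSpace.exists_countable_dense E
  have hs : ∀ᵐ ω ∂μ, ∀ u ∈ s, ∀ v ∈ s, |g u ω - g v ω| ≤ η ω * ‖u - v‖ := by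
    simp only [ae_ball_iff hs_count]
    exact fun u _ v _ => h u v
  filter_upwards [hs] with ω hω
  exact forall_abs_sub_le_of_dense (hc ω) hs_dense hω

end AeLipschitz

section Convexity

variable {Ω E : Type*} [MeasurableSpace Ω] {μ : Measure Ω} [AddCommGroup E] [Module ℝ E]
  {g : E → Ω → ℝ} {x y : Ω → E}

theorem integral_comp_convexCombination_le (hconv : ∀ ω, ConvexOn ℝ Set.univ (g · ω))
    (hx : Integrable (fun ω => g (x ω) ω) μ) (hy : Integrable (fun ω => g (y ω) ω) μ)
    {t : ℝ} (hxy : Integrable (fun ω => g (t • x ω + (1 - t) • y ω) ω) μ) (ht₀ : 0 ≤ t)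
    (ht₁ : t ≤ 1) :
    ∫ ω, g (t • x ω + (1 - t) • y ω) ω ∂μ ≤
      t * ∫ ω, g (x ω) ω ∂μ + (1 - t) * ∫ ω, g (y ω) ω ∂μ := by
  rw [← integral_const_mul, ← integral_const_mul, ← integral_add (hx.const_mul t) (hy.const_mul _)]
  exact integral_mono hxy ((hx.const_mul t).add (hy.const_mul _)) fun ω =>
    (hconv ω).2 (Set.mem_univ _) (Set.mem_univ _) ht₀ (sub_nonneg.2 ht₁) (add_sub_cancel t 1)

end Convexity

section Expectation

variable {Ω E : Type*} [MeasurableSpace Ω] {μ : Measure Ω}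
  [NormedAddCommGroup E] [InnerProductSpace ℝ E] [FiniteDimensional ℝ E]
  [MeasurableSpace E] [BorelSpace E]
  {g : E → Ω → ℝ} {η : Ω → ℝ} {x : Ω → E}

theorem aemeasurable_comp_of_continuous_of_measurable (hc : ∀ ω, Continuous (g · ω))
    (hm : ∀ u, Measurable (g u)) (hx : AEMeasurable x μ) :
    AEMeasurable (fun ω => g (x ω) ω) μ :=
  (measurable_uncurry_of_continuous_of_measurable hc hm).comp_aemeasurable
    (hx.prodMk aemeasurable_id)

theorem aemeasurable_fderiv_comp_apply (hdiff : ∀ ω, Differentiable ℝ (g · ω))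
    (hm : ∀ u, Measurable (g u)) (hx : AEMeasurable x μ) (v : E) :
    AEMeasurable (fun ω => fderiv ℝ (g · ω) (x ω) v) μ := by
  have hc : ∀ ω, Continuous (g · ω) := fun ω => (hdiff ω).continuous
  refine aemeasurable_of_tendsto_metrizable_ae'
    (f := fun (k : ℕ) ω => (k : ℝ) • (g (x ω + (k : ℝ)⁻¹ • v) ω - g (x ω) ω)) (fun k => ?_)
    (Eventually.of_forall fun ω => (hdiff ω).differentiableAt.hasFDerivAt.lim v ?_)
  · exact ((aemeasurable_comp_of_continuous_of_measurable hc hm (hx.add_const _)).sub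
      (aemeasurable_comp_of_continuous_of_measurable hc hm hx)).const_smul (k : ℝ)
  · simpa using tendsto_natCast_atTop_atTop

theorem aemeasurable_gradient_comp (hdiff : ∀ ω, Differentiable ℝ (g · ω))
    (hm : ∀ u, Measurable (g u)) (hx : AEMeasurable x μ) :
    AEMeasurable (fun ω => gradient (g · ω) (x ω)) μ := by
  let b := stdOrthonormalBasis ℝ E
  simp_rw [← b.sum_fderiv_smul_eq_gradient]
  exact Finset.aemeasurable_fun_sum _ fun i _ =>
    (aemeasurable_fderiv_comp_apply hdiff hm hx (b i)).smul_const (b i)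

theorem memLp_gradient_comp {p : ℝ≥0∞} (hdiff : ∀ ω, Differentiable ℝ (g · ω))
    (hm : ∀ u, Measurable (g u)) (hη : MemLp η p μ) (hη_nonneg : ∀ ω, 0 ≤ η ω)
    (hLip : ∀ᵐ ω ∂μ, ∀ u v, |g u ω - g v ω| ≤ η ω * ‖u - v‖) (hx : AEMeasurable x μ) :
    MemLp (fun ω => gradient (g · ω) (x ω)) p μ := by
  refine hη.of_le (aemeasurable_gradient_comp hdiff hm hx).aestronglyMeasurable ?_
  filter_upwards [hLip] with ω hω
  rw [Real.norm_of_nonneg (hη_nonneg ω)]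
  exact norm_gradient_le_of_abs_sub_le (hη_nonneg ω) fun v => hω v (x ω)

theorem integrable_comp_of_memLp {p q : ℝ≥0∞} [p.HolderConjugate q]
    (hc : ∀ ω, Continuous (g · ω)) (hm : ∀ u, Measurable (g u))
    (hg0 : Integrable (g 0) μ) (hη : MemLp η p μ)
    (hLip : ∀ᵐ ω ∂μ, ∀ u v, |g u ω - g v ω| ≤ η ω * ‖u - v‖) (hx : MemLp x q μ) :
    Integrable (fun ω => g (x ω) ω) μ := by
  have hηx : Integrable (fun ω => η ω * ‖x ω‖) μ := hη.integrable_mul hx.norm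
  refine (hg0.norm.add hηx).mono'
    (aemeasurable_comp_of_continuous_of_measurable hc hm hx.aemeasurable).aestronglyMeasurable ?_
  filter_upwards [hLip] with ω hω
  have hx0 := hω (x ω) 0
  rw [sub_zero] at hx0
  simp only [Pi.add_apply, Real.norm_eq_abs]
  linarith [abs_sub_abs_le_abs_sub (g (x ω) ω) (g 0 ω)]

theorem hasDerivAt_integral_comp_add_smul {d : Ω → E} (hdiff : ∀ ω, Differentiable ℝ (g · ω))
    (hm : ∀ u, Measurable (g u)) (hLip : ∀ᵐ ω ∂μ, ∀ u v, |g u ω - g v ω| ≤ η ω * ‖u - v‖)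
    (hx : AEMeasurable x μ) (hd : AEMeasurable d μ) (hgx : Integrable (fun ω => g (x ω) ω) μ)
    (hηd : Integrable (fun ω => η ω * ‖d ω‖) μ) :
    HasDerivAt (fun t : ℝ => ∫ ω, g (x ω + t • d ω) ω ∂μ)
      (∫ ω, ⟪gradient (g · ω) (x ω), d ω⟫ ∂μ) 0 := by
  have hc : ∀ ω, Continuous (g · ω) := fun ω => (hdiff ω).continuous
  refine (hasDerivAt_integral_of_dominated_loc_of_lip (bound := fun ω => η ω * ‖d ω‖)
    Filter.univ_mem ?_ (by simpa using hgx) ?_ ?_ hηd ?_).2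
  · exact Eventually.of_forall fun t => (aemeasurable_comp_of_continuous_of_measurable hc hm
      (hx.add (hd.const_smul t))).aestronglyMeasurable
  · exact (aemeasurable_gradient_comp hdiff hm hx).aestronglyMeasurable.inner
      hd.aestronglyMeasurable
  · filter_upwards [hLip] with ω hω
    refine LipschitzWith.lipschitzOnWith (LipschitzWith.of_dist_le_mul fun s t => ?_)
    rw [Real.dist_eq, Real.dist_eq, Real.coe_nnabs]
    calc |g (x ω + s • d ω) ω - g (x ω + t • d ω) ω|
        ≤ η ω * ‖(s - t) • d ω‖ := by
          rw [sub_smul, ← add_sub_add_left_eq_sub _ _ (x ω)]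
          exact hω _ _
      _ = η ω * ‖d ω‖ * |s - t| := by rw [norm_smul, Real.norm_eq_abs]; ring
      _ ≤ |η ω * ‖d ω‖| * |s - t| := by gcongr; exact le_abs_self _
  · refine Eventually.of_forall fun ω => ?_
    rw [inner_gradient_left]
    exact (hdiff ω).differentiableAt.hasFDerivAt.hasLineDerivAt (d ω)

end Expectation

theorem expectation_functional_gateaux_general
    {Ω : Type*} {n : ℕ} {mF : MeasurableSpace Ω} {μ : Measure Ω}
    (g : EuclideanSpace ℝ (Fin n) → Ω → ℝ)
    (hconv : ∀ ω, ConvexOn ℝ Set.univ (fun u => g u ω))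
    (hC1 : ∀ ω, ContDiff ℝ 1 (fun u => g u ω))
    (hmeas : ∀ u, Measurable (fun ω => g u ω))
    (hg0 : Integrable (fun ω => g 0 ω) μ)
    (η : Ω → ℝ) (hηnn : ∀ ω, 0 ≤ η ω) (hη2 : MemLp η 2 μ)
    (hLip : ∀ u v : EuclideanSpace ℝ (Fin n),
      ∀ᵐ ω ∂μ, |g u ω - g v ω| ≤ η ω * ‖u - v‖) :
    (∀ x : Ω → EuclideanSpace ℝ (Fin n), MemLp x 2 μ →
        Integrable (fun ω => g (x ω) ω) μ) ∧
    (∀ x y : Ω → EuclideanSpace ℝ (Fin n), MemLp x 2 μ → MemLp y 2 μ →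
        ∀ t : ℝ, 0 ≤ t → t ≤ 1 →
        (∫ ω, g (t • x ω + (1 - t) • y ω) ω ∂μ) ≤
          t * (∫ ω, g (x ω) ω ∂μ) + (1 - t) * (∫ ω, g (y ω) ω ∂μ)) ∧
    (∀ x : Ω → EuclideanSpace ℝ (Fin n), MemLp x 2 μ →
        MemLp (fun ω => gradient (fun u => g u ω) (x ω)) 2 μ) ∧
    (∀ x d : Ω → EuclideanSpace ℝ (Fin n), MemLp x 2 μ → MemLp d 2 μ →
        Tendsto
          (fun t : ℝ =>
            ((∫ ω, g (x ω + t • d ω) ω ∂μ) - ∫ ω, g (x ω) ω ∂μ) / t)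
          (nhdsWithin 0 (Set.Ioi 0))
          (nhds (∫ ω, ⟪gradient (fun u => g u ω) (x ω), d ω⟫ ∂μ))) := by
  have hdiff : ∀ ω, Differentiable ℝ (g · ω) := fun ω => (hC1 ω).differentiable one_ne_zero
  have hcont : ∀ ω, Continuous (g · ω) := fun ω => (hC1 ω).continuous
  have hLip' := ae_forall_abs_sub_le hcont hLip
  have hint : ∀ x : Ω → EuclideanSpace ℝ (Fin n), MemLp x 2 μ →
      Integrable (fun ω => g (x ω) ω) μ :=
    fun x hx => integrable_comp_of_memLp hcont hmeas hg0 hη2 hLip' hx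
  refine ⟨hint, fun x y hx hy t ht₀ ht₁ => ?_,
    fun x hx => memLp_gradient_comp hdiff hmeas hη2 hηnn hLip' hx.aemeasurable,
    fun x d hx hd => ?_⟩
  · exact integral_comp_convexCombination_le hconv (hint x hx) (hint y hy)
      (hint _ ((hx.const_smul t).add (hy.const_smul (1 - t)))) ht₀ ht₁
  · have hderiv := hasDerivAt_integral_comp_add_smul hdiff hmeas hLip' hx.aemeasurable
      hd.aemeasurable (hint x hx) (hη2.integrable_mul hd.norm)
    simpa [div_eq_inv_mul] using hderiv.tendsto_slope_zero_right

/-- For a convex integrand `g`, continuously differentiable in its first variable,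
measurable in the second, with an `L²` Lipschitz modulus `η`, the expectation functional
`f(x) = E g(x(ω), ω)` is well defined (the integrand is integrable), convex on `L²`, and
Gâteaux differentiable with derivative `ω ↦ ∇_x g(x(ω), ω)`, which belongs to `L²`. -/
theorem expectation_functional_gateaux
    {Ω : Type*} {n : ℕ} {mF : MeasurableSpace Ω} {μ : Measure Ω} [IsProbabilityMeasure μ]
    (g : EuclideanSpace ℝ (Fin n) → Ω → ℝ)
    (hconv : ∀ ω, ConvexOn ℝ Set.univ (fun u => g u ω))
    (hC1 : ∀ ω, ContDiff ℝ 1 (fun u => g u ω))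
    (hmeas : ∀ u, Measurable (fun ω => g u ω))
    (hg0 : Integrable (fun ω => g 0 ω) μ)
    (η : Ω → ℝ) (hηmeas : Measurable η) (hηnn : ∀ ω, 0 ≤ η ω) (hη2 : MemLp η 2 μ)
    (hLip : ∀ u v : EuclideanSpace ℝ (Fin n),
      ∀ᵐ ω ∂μ, |g u ω - g v ω| ≤ η ω * ‖u - v‖) :
    (∀ x : Ω → EuclideanSpace ℝ (Fin n), MemLp x 2 μ →
        Integrable (fun ω => g (x ω) ω) μ) ∧
    (∀ x y : Ω → EuclideanSpace ℝ (Fin n), MemLp x 2 μ → MemLp y 2 μ →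
        ∀ t : ℝ, 0 ≤ t → t ≤ 1 →
        (∫ ω, g (t • x ω + (1 - t) • y ω) ω ∂μ) ≤
          t * (∫ ω, g (x ω) ω ∂μ) + (1 - t) * (∫ ω, g (y ω) ω ∂μ)) ∧
    (∀ x : Ω → EuclideanSpace ℝ (Fin n), MemLp x 2 μ →
        MemLp (fun ω => gradient (fun u => g u ω) (x ω)) 2 μ) ∧
    (∀ x d : Ω → EuclideanSpace ℝ (Fin n), MemLp x 2 μ → MemLp d 2 μ →
        Tendsto
          (fun t : ℝ =>
            ((∫ ω, g (x ω + t • d ω) ω ∂μ) - ∫ ω, g (x ω) ω ∂μ) / t)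
          (nhdsWithin 0 (Set.Ioi 0))
          (nhds (∫ ω, ⟪gradient (fun u => g u ω) (x ω), d ω⟫ ∂μ))) :=
  expectation_functional_gateaux_general (mF := mF) g hconv hC1 hmeas hg0 η hηnn hη2 hLip
end

section
/- Let Ω = [0,1] with Lebesgue measure, 𝒞 = { x ∈ L²(0,1) : x(ω) ≥ 0 a.e. }, and 𝒩 = { x ∈ L²(0,1) : x is a.e. equal to a constant }. Then cone(𝒞 − 𝒩), the cone generated by the set difference 𝒞 − 𝒩, contains L^∞(0,1) but is not all of L²(0,1); in particular, cone(𝒞 − 𝒩) is not a closed linear subspace of L²(0,1), so the Attouch–Brezis qualification condition fails. -/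
/-!
Every element `t • (a - b)` of `cone(𝒞 − 𝒩)`, with `a ≥ 0` and `b = c` a.e., is essentially
bounded below by `-t c`; the function `-x ^ (-1/4)` lies in `L²(0,1)` but is not, so the cone is
not all of `L²`. On the other hand a bounded `f` equals `(f + C) - C` with `f + C ≥ 0`, so the cone
contains `L^∞`, which is dense in `L²`; a closed cone would therefore be everything.
-/

open MeasureTheory Filter Set Topology
open scoped ENNReal

theorem memLp_rpow_Icc_zero {s t : ℝ} {p : ℝ≥0∞} (ht : 0 < t) (hp₀ : p ≠ 0) (hp : p ≠ ∞)
    (hs : -1 < s * p.toReal) : MemLp (fun x : ℝ => x ^ s) p (volume.restrict (Icc 0 t)) := by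
  have hmeas : AEStronglyMeasurable (fun x : ℝ => x ^ s) (volume.restrict (Icc 0 t)) :=
    (measurable_id.pow_const s).aestronglyMeasurable
  rw [← integrable_norm_rpow_iff hmeas hp₀ hp]
  have hint : IntegrableOn (fun x : ℝ => x ^ (s * p.toReal)) (Icc 0 t) :=
    ((intervalIntegral.integrableOn_Ioo_rpow_iff ht).2 hs).congr_set_ae Ioo_ae_eq_Icc.symm
  refine hint.congr_fun (fun x hx => ?_) measurableSet_Icc
  rw [Real.norm_eq_abs, abs_of_nonneg (Real.rpow_nonneg hx.1 s), ← Real.rpow_mul hx.1]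

theorem not_ae_le_of_tendsto_nhdsGT_atTop {f : ℝ → ℝ} {a b : ℝ} (hab : a < b)
    (hf : Tendsto f (𝓝[>] a) atTop) (M : ℝ) : ¬ ∀ᵐ x ∂volume.restrict (Icc a b), f x ≤ M := by
  intro hM
  obtain ⟨u, hu, hMf⟩ := mem_nhdsGT_iff_exists_Ioo_subset.1 (hf.eventually_gt_atTop M)
  have hnull : volume.restrict (Icc a b) (Ioo a (min u b)) = 0 :=
    measure_mono_null (fun x hx => not_le.2 (hMf ⟨hx.1, hx.2.trans_le (min_le_left _ _)⟩ :
      M < f x)) (ae_iff.1 hM)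
  rw [Measure.restrict_eq_self _ (Ioo_subset_Icc_self.trans (Icc_subset_Icc_right
    (min_le_right _ _))), Real.volume_Ioo, ENNReal.ofReal_eq_zero] at hnull
  linarith [lt_min (mem_Ioi.1 hu) hab]

namespace MeasureTheory.Lp

variable {α E : Type*} [MeasurableSpace α] [NormedAddCommGroup E] {p : ℝ≥0∞} {μ : Measure α}

theorem dense_setOf_ae_norm_le [Fact (1 ≤ p)] (hp : p ≠ ∞) :
    Dense {f : Lp E p μ | ∃ C, ∀ᵐ x ∂μ, ‖f x‖ ≤ C} :=
  (simpleFunc.denseRange hp).mono <| by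
    rintro _ ⟨s, rfl⟩
    obtain ⟨C, hC⟩ := (simpleFunc.toSimpleFunc s).exists_forall_norm_le
    exact ⟨C, (simpleFunc.toSimpleFunc_eq_toFun s).mono fun x hx => hx ▸ hC x⟩

theorem exists_not_ae_bddBelow_Icc {t : ℝ} (ht : 0 < t) (hp₀ : p ≠ 0) (hp : p ≠ ∞) :
    ∃ f : Lp ℝ p (volume.restrict (Icc 0 t)), ∀ m : ℝ,
      ¬ ∀ᵐ x ∂volume.restrict (Icc 0 t), m ≤ f x := by
  have hp_pos : 0 < p.toReal := ENNReal.toReal_pos hp₀ hp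
  have hs : -(2 * p.toReal)⁻¹ < 0 := neg_neg_of_pos (inv_pos.2 (by positivity))
  have hmem : MemLp (fun x : ℝ => x ^ (-(2 * p.toReal)⁻¹)) p (volume.restrict (Icc 0 t)) :=
    memLp_rpow_Icc_zero ht hp₀ hp (by field_simp; norm_num)
  refine ⟨-hmem.toLp _, fun m hm => not_ae_le_of_tendsto_nhdsGT_atTop ht
    (tendsto_rpow_neg_nhdsGT_zero hs) (-m) ?_⟩
  filter_upwards [hm, coeFn_neg (hmem.toLp _), hmem.coeFn_toLp] with x hm hneg htoLp
  rw [hneg, Pi.neg_apply, htoLp] at hm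
  linarith

/-- `cone(𝒞 − 𝒩)`, for `𝒞` the nonnegative functions and `𝒩` the constants. -/
def coneNonnegSubConst (p : ℝ≥0∞) (μ : Measure α) : Set (Lp ℝ p μ) :=
  {g | ∃ t : ℝ, 0 ≤ t ∧ ∃ a ∈ {f : Lp ℝ p μ | ∀ᵐ x ∂μ, 0 ≤ f x},
    ∃ b ∈ {f : Lp ℝ p μ | ∃ c : ℝ, ∀ᵐ x ∂μ, f x = c}, g = t • (a - b)}

theorem mem_coneNonnegSubConst_of_ae_abs_le [IsFiniteMeasure μ] {f : Lp ℝ p μ} {C : ℝ}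
    (hC : ∀ᵐ x ∂μ, |f x| ≤ C) : f ∈ coneNonnegSubConst p μ := by
  refine ⟨1, zero_le_one, f + Lp.const p μ C, ?_, Lp.const p μ C, ⟨C, coeFn_const p μ C⟩,
    by rw [one_smul, add_sub_cancel_right]⟩
  filter_upwards [hC, coeFn_add f (Lp.const p μ C), coeFn_const p μ C]
    with x hC hadd hconst
  rw [hadd, Pi.add_apply, hconst, Function.const_apply]
  linarith [neg_abs_le (f x)]

theorem exists_ae_le_of_mem_coneNonnegSubConst {g : Lp ℝ p μ}
    (hg : g ∈ coneNonnegSubConst p μ) : ∃ m, ∀ᵐ x ∂μ, m ≤ g x := by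
  obtain ⟨t, ht, a, ha, b, ⟨c, hc⟩, rfl⟩ := hg
  refine ⟨-(t * c), ?_⟩
  filter_upwards [ha, hc, coeFn_smul t (a - b), coeFn_sub a b] with x ha hc hsmul hsub
  rw [hsmul, Pi.smul_apply, hsub, Pi.sub_apply, hc, smul_eq_mul]
  nlinarith [mul_nonneg ht ha]

end MeasureTheory.Lp

/-- With `Ω = [0,1]` and Lebesgue measure, `𝒞` the nonnegative cone in `L²(0,1)` and
`𝒩` the subspace of (a.e.) constant functions, the cone generated by `𝒞 − 𝒩` contains
every (essentially) bounded element of `L²`, is not all of `L²`, and hence is not a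
closed linear subspace of `L²(0,1)`: the Attouch–Brezis qualification condition fails. -/
theorem attouch_brezis_fails_on_L2 :
    let μ : Measure ℝ := volume.restrict (Set.Icc (0 : ℝ) 1)
    let 𝒞 : Set (Lp ℝ 2 μ) := {f | ∀ᵐ ω ∂μ, 0 ≤ f ω}
    let 𝒩 : Set (Lp ℝ 2 μ) := {f | ∃ c : ℝ, ∀ᵐ ω ∂μ, f ω = c}
    let K : Set (Lp ℝ 2 μ) :=
      {g | ∃ t : ℝ, 0 ≤ t ∧ ∃ a ∈ 𝒞, ∃ b ∈ 𝒩, g = t • (a - b)}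
    (∀ f : Lp ℝ 2 μ, (∃ C : ℝ, ∀ᵐ ω ∂μ, |f ω| ≤ C) → f ∈ K) ∧
    (∃ f : Lp ℝ 2 μ, f ∉ K) ∧
    ¬ ∃ S : Submodule ℝ (Lp ℝ 2 μ), IsClosed (S : Set (Lp ℝ 2 μ)) ∧
        (S : Set (Lp ℝ 2 μ)) = K := by
  intro μ 𝒞 𝒩 K
  have hbdd : ∀ f : Lp ℝ 2 μ, (∃ C : ℝ, ∀ᵐ ω ∂μ, |f ω| ≤ C) → f ∈ K :=
    fun _ ⟨_, hC⟩ => Lp.mem_coneNonnegSubConst_of_ae_abs_le hC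
  obtain ⟨f₀, hf₀⟩ := Lp.exists_not_ae_bddBelow_Icc one_pos two_ne_zero ENNReal.ofNat_ne_top
  have hf₀K : f₀ ∉ K := fun hf => (Lp.exists_ae_le_of_mem_coneNonnegSubConst hf).elim hf₀
  refine ⟨hbdd, ⟨f₀, hf₀K⟩, ?_⟩
  rintro ⟨S, hS, hSK⟩
  have hKdense : Dense K := (Lp.dense_setOf_ae_norm_le (ENNReal.ofNat_ne_top (n := 2))).mono
    fun f (⟨C, hC⟩ : ∃ C, ∀ᵐ x ∂μ, ‖f x‖ ≤ C) =>
      hbdd f ⟨C, by simpa only [Real.norm_eq_abs] using hC⟩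
  exact hf₀K ((hSK ▸ hS).closure_subset (hKdense f₀))
end

section
/- Let H be a Hilbert space, β, r > 0 and let F : H → H be Lipschitz with constant L_F where r > L_F/β + 1. Given x, x̃, y, ỹ, λ, λ̃ ∈ H with λ − λ̃ = β(x̃ − ỹ), set ζ_x = F(x) − F(x̃) + β(x − x̃), and define φ = ⟨λ − λ̃, ỹ − y⟩ + βr⟨x − x̃, x − x̃ − ζ_x/(βr)⟩ + β⟨y − ỹ, y − ỹ⟩ + (1/β)⟨λ − λ̃, λ − λ̃⟩, and d with ‖d‖²_G = βr‖x − x̃ − ζ_x/(βr)‖² + β‖y − ỹ‖² + (1/β)‖λ − λ̃‖². Then φ ≥ (β/2)‖y − x̃‖² + (1/2)‖d‖²_G ≥ (1/2)‖d‖²_G. -/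
open RealInnerProductSpace

/-!
Write `u = x - x̃` and `s = βr`. By polarization, the `x`-part of `φ - ½‖d‖²_G` equals
`(s/2)‖u‖² - (1/(2s))‖ζ‖²`, which is nonnegative because the Lipschitz bound gives
`‖ζ‖ ≤ (L_F + β)‖u‖ ≤ s‖u‖`. After substituting `λ - λ̃ = β(x̃ - ỹ)`, the `y`- and
`λ`-parts of `φ - ½‖d‖²_G` add up to exactly `(β/2)‖y - x̃‖²`.
-/

theorem norm_sub_add_smul_sub_le {E : Type*} [SeminormedAddCommGroup E]
    [NormedSpace ℝ E] {F : E → E} {L β : ℝ} (hF : ∀ a b : E, ‖F a - F b‖ ≤ L * ‖a - b‖)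
    (hβ : 0 ≤ β) (a b : E) :
    ‖F a - F b + β • (a - b)‖ ≤ (L + β) * ‖a - b‖ :=
  calc ‖F a - F b + β • (a - b)‖ ≤ ‖F a - F b‖ + ‖β • (a - b)‖ := norm_add_le _ _
    _ ≤ L * ‖a - b‖ + β * ‖a - b‖ := by
      rw [norm_smul, Real.norm_of_nonneg hβ]
      exact add_le_add_left (hF a b) _
    _ = (L + β) * ‖a - b‖ := by ring

section InnerProduct

variable {H : Type*} [NormedAddCommGroup H] [InnerProductSpace ℝ H]

theorem real_inner_sub_sub_half_norm_sub_sq (a b : H) :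
    ⟪a, a - b⟫ - ‖a - b‖ ^ 2 / 2 = (‖a‖ ^ 2 - ‖b‖ ^ 2) / 2 := by
  rw [inner_sub_right, real_inner_self_eq_norm_sq, norm_sub_sq_real]
  ring

theorem half_norm_sub_sq_le_real_inner_sub {a b : H} (h : ‖b‖ ≤ ‖a‖) :
    ‖a - b‖ ^ 2 / 2 ≤ ⟪a, a - b⟫ := by
  have := real_inner_sub_sub_half_norm_sub_sq a b
  nlinarith [norm_nonneg b]

theorem mul_half_norm_sub_inv_smul_sq_le {s : ℝ} (hs : 0 < s) {u ζ : H}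
    (h : ‖ζ‖ ≤ s * ‖u‖) :
    s / 2 * ‖u - s⁻¹ • ζ‖ ^ 2 ≤ s * ⟪u, u - s⁻¹ • ζ⟫ := by
  have hζ : ‖s⁻¹ • ζ‖ ≤ ‖u‖ := by
    rw [norm_smul, Real.norm_of_nonneg (inv_nonneg.mpr hs.le), inv_mul_le_iff₀ hs]
    exact h
  have := mul_le_mul_of_nonneg_left (half_norm_sub_sq_le_real_inner_sub hζ) hs.le
  linarith

theorem real_inner_sub_add_inner_self_eq_of_eq_smul {β : ℝ} (hβ : β ≠ 0) {d x' y' : H}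
    (y : H) (hd : d = β • (x' - y')) :
    ⟪d, y' - y⟫ + β * ⟪y - y', y - y'⟫ + β⁻¹ * ⟪d, d⟫
      = β / 2 * ‖y - x'‖ ^ 2 + 1 / 2 * (β * ‖y - y'‖ ^ 2 + β⁻¹ * ‖d‖ ^ 2) := by
  have hy : y - x' = (y - y') - (x' - y') := by abel
  have hy' : y' - y = -(y - y') := (neg_sub y y').symm
  subst hd
  rw [hy, hy', norm_sub_sq_real, norm_smul, Real.norm_eq_abs, mul_pow, sq_abs, inner_neg_right,
    real_inner_smul_left, real_inner_smul_left, real_inner_smul_right, real_inner_self_eq_norm_sq,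
    real_inner_self_eq_norm_sq, real_inner_comm (x' - y')]
  field_simp
  ring

end InnerProduct

/-- The key estimate for the prediction step of the prediction–correction ADMM:
with `λ − λ̃ = β(x̃ − ỹ)` and `ζ = F(x) − F(x̃) + β(x − x̃)`,
`φ ≥ (β/2)‖y − x̃‖² + (1/2)‖d‖²_G ≥ (1/2)‖d‖²_G`. -/
theorem prediction_correction_phi_lower_bound
    {H : Type*} [NormedAddCommGroup H] [InnerProductSpace ℝ H]
    (F : H → H) (L_F β r : ℝ) (hL : 0 < L_F) (hβ : 0 < β)
    (hLip : ∀ a b : H, ‖F a - F b‖ ≤ L_F * ‖a - b‖)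
    (hr : r > L_F / β + 1)
    (x x' y y' l l' : H)
    (hl : l - l' = β • (x' - y')) :
    let ζ : H := F x - F x' + β • (x - x')
    let φ : ℝ := ⟪l - l', y' - y⟫
      + β * r * ⟪x - x', x - x' - (β * r)⁻¹ • ζ⟫
      + β * ⟪y - y', y - y'⟫ + β⁻¹ * ⟪l - l', l - l'⟫
    let dG : ℝ := β * r * ‖x - x' - (β * r)⁻¹ • ζ‖ ^ 2
      + β * ‖y - y'‖ ^ 2 + β⁻¹ * ‖l - l'‖ ^ 2
    β / 2 * ‖y - x'‖ ^ 2 + 1 / 2 * dG ≤ φ ∧ 1 / 2 * dG ≤ φ := by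
  intro ζ φ dG
  have hs : L_F + β < β * r := by
    have := (div_lt_iff₀ hβ).mp (by linarith : L_F / β < r - 1)
    linarith
  have hζ : ‖ζ‖ ≤ β * r * ‖x - x'‖ :=
    (norm_sub_add_smul_sub_le hLip hβ.le x x').trans
      (mul_le_mul_of_nonneg_right hs.le (norm_nonneg _))
  have hx := mul_half_norm_sub_inv_smul_sq_le (by linarith) hζ
  have hyl := real_inner_sub_add_inner_self_eq_of_eq_smul hβ.ne' y hl
  have hyx : 0 ≤ β / 2 * ‖y - x'‖ ^ 2 := by positivity
  constructor <;> linarith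
end
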